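/- Let Δ be a (d−1)-dimensional matroid complex on n vertices. Then (∏_{i=1}^{n−d} m_i(Δ))/(n−d)! ≤ f_{d−1}(Δ) ≤ (∏_{i=1}^{n−d} M_i(Δ))/(n−d)!. Moreover, if either bound is attained with equality, then the minimal graded free resolution of the face ring k[Δ] is pure, i.e., m_i(Δ)=M_i(Δ) for all i=1,…,n−d. -/

import Mathlib

/-!
A matroid complex `Δ` decomposes at a vertex `v` that is not a coloop as `(Δ \ v) ∪ v * lk v`,
and both pieces are again matroid complexes, of ranks `d` and `d - 1`. Mayer–Vietoris and
induction show that `H̃_p(Δ)` vanishes for `p ≠ d - 1`, and, when `Δ` has no coloops, a nonzero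
top cycle `z` of `lk v` bounds a chain `y` of `Δ \ v`, so that `v * z - y` is a nonzero top cycle
of `Δ`. A coloop makes `Δ` a cone. By Hochster's formula `m_i` and `M_i` are therefore the least
and the largest size of a coloop-free set of nullity `i`, and these sets are exactly the sets of
non-coloops of spanning sets of nullity `i`.

Deleting the `n - d` elements outside a basis one at a time, keeping the set spanning, can be
done in `(n - d)! f_{d-1}` ways. At a spanning set of nullity `i` the next deletion may be any of
its non-coloops, whose number lies between `m_i` and `M_i`; this gives both bounds. If
`m_i < M_i`, a spanning set of nullity `i` with `M_i` (resp. `m_i`) non-coloops makes the lower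
(resp. upper) count strict there, and strictness propagates to every spanning superset.
-/

open scoped Classical

namespace MultConj

variable {n : ℕ}

/-- `K` is (the set of faces of) an abstract simplicial complex on the
vertex set `Fin n`: it contains the empty face and is closed under subsets. -/
def IsComplex (K : Finset (Finset (Fin n))) : Prop :=
  ∅ ∈ K ∧ ∀ F ∈ K, ∀ G ⊆ F, G ∈ K

/-- The induced subcomplex `Δ_W` on a vertex set `W`. -/
def induced (K : Finset (Finset (Fin n))) (W : Finset (Fin n)) :
    Finset (Finset (Fin n)) :=
  K.filter fun F => F ⊆ W

/-- The link of a face `F`. -/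
def link (K : Finset (Finset (Fin n))) (F : Finset (Fin n)) :
    Finset (Finset (Fin n)) :=
  K.filter fun G => F ∩ G = ∅ ∧ F ∪ G ∈ K

/-- The `i`-skeleton: all faces of dimension at most `i`,
i.e. with at most `i+1` vertices. -/
def skel (K : Finset (Finset (Fin n))) (i : ℕ) : Finset (Finset (Fin n)) :=
  K.filter fun F => F.card ≤ i + 1

/-- The number of faces with `j` vertices, i.e. `f_{j-1}(K)`. -/
def fcount (K : Finset (Finset (Fin n))) (j : ℕ) : ℕ :=
  (K.filter fun F => F.card = j).card

/-- The dimension of `K`, as an integer. -/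
noncomputable def dimOf (K : Finset (Finset (Fin n))) : ℤ :=
  ((K.sup fun F => F.card : ℕ) : ℤ) - 1

variable (k : Type) [Field k]

/-- Simplicial chains supported on the faces of `K` having `j` vertices
(that is, `(j-1)`-dimensional chains), with coefficients in `k`. -/
abbrev chain (K : Finset (Finset (Fin n))) (j : ℕ) : Type :=
  {F : Finset (Fin n) // F ∈ K ∧ F.card = j} → k

/-- The simplicial boundary operator (with the standard orientation coming
from the linear order on the vertices), viewed as landing in the space of
all functions on finsets. -/
noncomputable def bdry (K : Finset (Finset (Fin n))) (j : ℕ)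
    (c : chain k K j) : Finset (Fin n) → k :=
  fun G => ∑ v : Fin n,
    if h : v ∉ G ∧ insert v G ∈ K ∧ (insert v G).card = j then
      (-1 : k) ^ (G.filter fun w => w < v).card * c ⟨insert v G, h.2⟩
    else 0

/-- Extension of a chain by zero to a function on all finsets. -/
def ext (K : Finset (Finset (Fin n))) (j : ℕ) (c : chain k K j) :
    Finset (Fin n) → k :=
  fun F => if h : F ∈ K ∧ F.card = j then c ⟨F, h⟩ else 0

/-- `H̃_p(K; k) ≠ 0`: there is a reduced `p`-cycle which is not a boundary.
(For `p ≤ -2` this is false, as there is no `j : ℕ` with `j = p + 1`.) -/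
def homNonzero (K : Finset (Finset (Fin n))) (p : ℤ) : Prop :=
  ∃ j : ℕ, (j : ℤ) = p + 1 ∧
    ∃ c : chain k K j, bdry k K j c = 0 ∧
      ∀ b : chain k K (j + 1), bdry k K (j + 1) b ≠ ext k K j c

/-- `H̃_p(K; k) ≅ k`: there is a reduced `p`-cycle `z` which is not a
boundary, and modulo boundaries every `p`-cycle is a multiple of `z`. -/
def homIsK (K : Finset (Finset (Fin n))) (p : ℤ) : Prop :=
  ∃ j : ℕ, (j : ℤ) = p + 1 ∧
    ∃ z : chain k K j, bdry k K j z = 0 ∧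
      (∀ b : chain k K (j + 1), bdry k K (j + 1) b ≠ ext k K j z) ∧
      ∀ c : chain k K j, bdry k K j c = 0 →
        ∃ a : k, ∃ b : chain k K (j + 1),
          bdry k K (j + 1) b = ext k K j (c - a • z)

/-- Cohen–Macaulayness of `K` over `k`, via Reisner's criterion:
`H̃_i(lk F; k) = 0` for every face `F` and every `i < dim K - |F|`. -/
def IsCM (K : Finset (Finset (Fin n))) : Prop :=
  ∀ F ∈ K, ∀ i : ℤ, i < dimOf K - F.card → ¬ homNonzero k (link K F) i

/-- `K` is `q`-Cohen–Macaulay over `k`: removing any at most `q - 1`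
vertices leaves a Cohen–Macaulay complex of the same dimension. -/
def IsQCM (q : ℕ) (K : Finset (Finset (Fin n))) : Prop :=
  ∀ U : Finset (Fin n), U.card ≤ q - 1 →
    IsCM k (induced K Uᶜ) ∧ dimOf (induced K Uᶜ) = dimOf K

/-- `q(K)`: the largest `q` for which `K` is `q`-CM over `k`. -/
noncomputable def qConn (K : Finset (Finset (Fin n))) : ℕ :=
  sSup {q : ℕ | IsQCM k q K}

/-- The CM-connectivity sequence: `q_i = q(Skel_i K)`. -/
noncomputable def qSeq (K : Finset (Finset (Fin n))) (i : ℕ) : ℕ :=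
  qConn k (skel K i)

/-- The minimal shifts `m_i` in the minimal free resolution of the face ring,
via Hochster's formula. -/
noncomputable def mshift (K : Finset (Finset (Fin n))) (i : ℕ) : ℕ :=
  sInf {m : ℕ | ∃ W : Finset (Fin n), W.card = m ∧
    homNonzero k (induced K W) ((W.card : ℤ) - i - 1)}

/-- The maximal shifts `M_i` in the minimal free resolution of the face ring,
via Hochster's formula. -/
noncomputable def Mshift (K : Finset (Finset (Fin n))) (i : ℕ) : ℕ :=
  sSup {m : ℕ | ∃ W : Finset (Fin n), W.card = m ∧
    homNonzero k (induced K W) ((W.card : ℤ) - i - 1)}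

/-- `K` is pure: every maximal face has cardinality `dim K + 1`. -/
def IsPure (K : Finset (Finset (Fin n))) : Prop :=
  ∀ F ∈ K, (∀ G ∈ K, F ⊆ G → G = F) → (F.card : ℤ) = dimOf K + 1

/-- `K` is connected: any two vertices are joined by a path of edges. -/
def Connected (K : Finset (Finset (Fin n))) : Prop :=
  ∀ u v : Fin n, {u} ∈ K → {v} ∈ K →
    Relation.ReflTransGen (fun a b => ({a, b} : Finset (Fin n)) ∈ K) u v

/-- `K` is Gorenstein* over `k`; by Stanley's topological characterization
this means that `K` is a `k`-homology sphere: for every face `F` the link of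
`F` has vanishing reduced homology below dimension `dim K - |F|` and reduced
homology isomorphic to `k` in dimension `dim K - |F|`. -/
def IsGorensteinStar (K : Finset (Finset (Fin n))) : Prop :=
  IsComplex K ∧
  (∀ F ∈ K, ∀ i : ℤ, i < dimOf K - F.card → ¬ homNonzero k (link K F) i) ∧
  (∀ F ∈ K, homIsK k (link K F) (dimOf K - F.card))

section Boundary

noncomputable def insSign (G : Finset (Fin n)) (v : Fin n) : k :=
  (-1) ^ (G.filter fun w => w < v).card

lemma insSign_mul_self (G : Finset (Fin n)) (v : Fin n) :
    insSign k G v * insSign k G v = 1 := by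
  rw [insSign, ← pow_add, ← two_mul, pow_mul, neg_one_sq, one_pow]

lemma insSign_insert {G : Finset (Fin n)} {w : Fin n} (hw : w ∉ G) (v : Fin n) :
    insSign k (insert w G) v = (if w < v then -1 else 1) * insSign k G v := by
  unfold insSign
  rw [Finset.filter_insert]
  split_ifs with h
  · rw [Finset.card_insert_of_notMem (by simp [hw]), pow_succ, mul_comm]
  · rw [one_mul]

lemma insSign_mul_insSign_insert {G : Finset (Fin n)} {v w : Fin n} (hv : v ∉ G)
    (hw : w ∉ G) (hvw : v ≠ w) :
    insSign k G v * insSign k (insert v G) w = -(insSign k G w * insSign k (insert w G) v) := by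
  rw [insSign_insert k hv, insSign_insert k hw]
  rcases hvw.lt_or_gt with h | h
  · rw [if_pos h, if_neg h.asymm]; ring
  · rw [if_neg h.asymm, if_pos h]; ring

lemma insSign_insert_mul_insSign_insert {G : Finset (Fin n)} {v w : Fin n} (hv : v ∉ G)
    (hw : w ∉ G) (hvw : v ≠ w) :
    insSign k (insert v G) w * insSign k (insert w G) v = -(insSign k G v * insSign k G w) := by
  rw [insSign_insert k hv, insSign_insert k hw]
  rcases hvw.lt_or_gt with h | h
  · rw [if_pos h, if_neg h.asymm]; ring
  · rw [if_neg h.asymm, if_pos h]; ring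

/-- The boundary `bdry`, extended to all functions `Finset (Fin n) → k`. -/
noncomputable def boundary : (Finset (Fin n) → k) →ₗ[k] (Finset (Fin n) → k) where
  toFun x G := ∑ v, if v ∈ G then 0 else insSign k G v * x (insert v G)
  map_add' x y := by
    ext G
    simp only [Pi.add_apply, ← Finset.sum_add_distrib]
    refine Finset.sum_congr rfl fun v _ => ?_
    split_ifs <;> ring
  map_smul' a x := by
    ext G
    simp only [Pi.smul_apply, smul_eq_mul, RingHom.id_apply, Finset.mul_sum]
    refine Finset.sum_congr rfl fun v _ => ?_
    split_ifs <;> ring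

lemma boundary_apply (x : Finset (Fin n) → k) (G : Finset (Fin n)) :
    boundary k x G = ∑ v, if v ∈ G then 0 else insSign k G v * x (insert v G) := rfl

/-- The cone `v * x` over a chain `x`. -/
noncomputable def cone (v : Fin n) (x : Finset (Fin n) → k) : Finset (Fin n) → k :=
  fun F => if v ∈ F then insSign k (F.erase v) v * x (F.erase v) else 0

@[simp]
lemma cone_zero (v : Fin n) : cone k v 0 = 0 := by
  ext F; simp [cone]

/-- Restriction to the faces through `v`, read as a chain on the link of `v`. -/
noncomputable def linkProj (v : Fin n) (x : Finset (Fin n) → k) : Finset (Fin n) → k :=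
  fun F => if v ∈ F then 0 else insSign k F v * x (insert v F)

lemma boundary_cone_of_notMem (v : Fin n) (x : Finset (Fin n) → k) {G : Finset (Fin n)}
    (hv : v ∉ G) : boundary k (cone k v x) G = x G := by
  rw [boundary_apply, Finset.sum_eq_single v]
  · rw [if_neg hv, cone, if_pos (Finset.mem_insert_self v G), Finset.erase_insert hv,
      ← mul_assoc, insSign_mul_self, one_mul]
  · intro w _ hwv
    split_ifs with hw
    · rfl
    · rw [cone, if_neg (by simp [hwv.symm, hv]), mul_zero]
  · simp

lemma boundary_cone (v : Fin n) (x : Finset (Fin n) → k) :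
    boundary k (cone k v x) = x - cone k v (boundary k x) := by
  ext G
  by_cases hv : v ∈ G
  swap
  · simp [boundary_cone_of_notMem k v x hv, cone, hv]
  set G' := G.erase v
  have hvG' : v ∉ G' := Finset.notMem_erase v G
  have hG : insert v G' = G := Finset.insert_erase hv
  have hterm : ∀ w ∈ Finset.univ.erase v,
      (if w ∈ G then 0 else insSign k G w * cone k v x (insert w G))
        = -insSign k G' v * (if w ∈ G' then 0 else insSign k G' w * x (insert w G')) := by
    intro w hw
    have hwv : w ≠ v := Finset.ne_of_mem_erase hw
    by_cases hwG : w ∈ G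
    · rw [if_pos hwG, if_pos (Finset.mem_erase.2 ⟨hwv, hwG⟩), mul_zero]
    have hwG' : w ∉ G' := fun h => hwG (Finset.mem_of_mem_erase h)
    rw [if_neg hwG, if_neg hwG', cone, if_pos (Finset.mem_insert_of_mem hv),
      Finset.erase_insert_of_ne hwv, ← mul_assoc,
      show insSign k G w = insSign k (insert v G') w by rw [hG],
      insSign_insert_mul_insSign_insert k hvG' hwG' hwv.symm]
    ring
  rw [boundary_apply, ← Finset.add_sum_erase _ _ (Finset.mem_univ v), if_pos hv, zero_add,
    Finset.sum_congr rfl hterm, ← Finset.mul_sum, Pi.sub_apply, cone, if_pos hv,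
    boundary_apply k x G', ← Finset.add_sum_erase _ _ (Finset.mem_univ v), if_neg hvG', hG]
  linear_combination (x G) * insSign_mul_self k G' v

lemma boundary_linkProj (v : Fin n) (x : Finset (Fin n) → k) :
    boundary k (linkProj k v x) = -linkProj k v (boundary k x) := by
  ext G
  by_cases hv : v ∈ G
  · simp only [boundary_apply, Pi.neg_apply, linkProj, if_pos hv, neg_zero]
    refine Finset.sum_eq_zero fun w _ => ?_
    simp [Finset.mem_insert_of_mem hv]
  simp only [boundary_apply, Pi.neg_apply, linkProj, if_neg hv, Finset.mul_sum,
    ← Finset.sum_neg_distrib]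
  refine Finset.sum_congr rfl fun w _ => ?_
  by_cases hwv : w = v
  · subst hwv; simp [hv]
  by_cases hw : w ∈ G
  · simp [hw]
  rw [if_neg hw, if_neg (by simp [hv, Ne.symm hwv]),
    if_neg (by simp [hw, hwv]),
    Finset.insert_comm v w G, ← mul_assoc, ← mul_assoc,
    insSign_mul_insSign_insert k hw hv hwv, neg_mul]

end Boundary

section Chains

variable {K K' : Finset (Finset (Fin n))}

def chains (K : Finset (Finset (Fin n))) (j : ℕ) : Submodule k (Finset (Fin n) → k) where
  carrier := {x | ∀ F, x F ≠ 0 → F ∈ K ∧ F.card = j}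
  add_mem' {x y} hx hy F h := by
    by_cases hxF : x F = 0
    · exact hy F (by simpa [hxF] using h)
    · exact hx F hxF
  zero_mem' _ h := absurd rfl h
  smul_mem' _ _ hx F h := hx F (right_ne_zero_of_mul h)

lemma chains_mono (h : K' ⊆ K) (j : ℕ) : chains k K' j ≤ chains k K j :=
  fun _ hx F hF => ⟨h (hx F hF).1, (hx F hF).2⟩

lemma chains_eq_bot {j : ℕ} (h : ∀ F ∈ K, F.card ≠ j) : chains k K j = ⊥ := by
  refine (Submodule.eq_bot_iff _).2 fun x hx => funext fun F => ?_
  by_contra hF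
  exact h F (hx F hF).1 (hx F hF).2

lemma boundary_eq_zero_of_mem_chains_zero {x : Finset (Fin n) → k} (hx : x ∈ chains k K 0) :
    boundary k x = 0 := by
  ext G
  refine (boundary_apply k x G).trans (Finset.sum_eq_zero fun v _ => ?_)
  split_ifs with hv
  · rfl
  · by_contra h
    have := (hx _ (right_ne_zero_of_mul h)).2
    rw [Finset.card_insert_of_notMem hv] at this
    omega

/-- `H̃_{j-1}(K; k) = 0`, phrased with chains supported on faces with `j` vertices. -/
def IsAcyclicAt (K : Finset (Finset (Fin n))) (j : ℕ) : Prop :=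
  ∀ x ∈ chains k K j, boundary k x = 0 → ∃ y ∈ chains k K (j + 1), boundary k y = x

lemma ext_mem_chains {j : ℕ} (c : chain k K j) : ext k K j c ∈ chains k K j := by
  intro F hF
  by_contra h
  exact hF (dif_neg h)

lemma bdry_eq_boundary_ext {j : ℕ} (c : chain k K j) :
    bdry k K j c = boundary k (ext k K j c) := by
  ext G
  refine Finset.sum_congr rfl fun v _ => ?_
  by_cases hv : v ∈ G
  · rw [dif_neg (by tauto), if_pos hv]
  · rw [if_neg hv, ext]
    split_ifs <;> first | rfl | (exfalso; tauto) | simp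

lemma exists_ext_eq {j : ℕ} {x : Finset (Fin n) → k} (hx : x ∈ chains k K j) :
    ∃ c : chain k K j, ext k K j c = x := by
  refine ⟨fun F => x F.1, funext fun F => ?_⟩
  rw [ext]
  split_ifs with h
  · rfl
  · by_contra hne
    exact h (hx F (Ne.symm hne))

theorem homNonzero_iff (p : ℤ) :
    homNonzero k K p ↔ ∃ j : ℕ, (j : ℤ) = p + 1 ∧ ¬ IsAcyclicAt k K j := by
  refine exists_congr fun j => and_congr_right fun _ => ?_
  simp only [IsAcyclicAt, not_forall, not_exists, not_and, exists_prop]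
  constructor
  · rintro ⟨c, hc, hb⟩
    refine ⟨ext k K j c, ext_mem_chains k c, by rwa [← bdry_eq_boundary_ext],
      fun y hy hyc => ?_⟩
    obtain ⟨b, rfl⟩ := exists_ext_eq k hy
    exact hb b (by rw [bdry_eq_boundary_ext, hyc])
  · rintro ⟨x, hx, hc, hb⟩
    obtain ⟨c, rfl⟩ := exists_ext_eq k hx
    exact ⟨c, by rwa [bdry_eq_boundary_ext], fun b hbc =>
      hb _ (ext_mem_chains k b) (by rw [← bdry_eq_boundary_ext, hbc])⟩

lemma isAcyclicAt_of_chains_eq_bot {j : ℕ} (h : chains k K j = ⊥) : IsAcyclicAt k K j := by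
  intro x hx _
  rw [h, Submodule.mem_bot] at hx
  exact ⟨0, Submodule.zero_mem _, by rw [map_zero, hx]⟩

lemma not_isAcyclicAt_iff_of_chains_succ_eq_bot {j : ℕ} (h : chains k K (j + 1) = ⊥) :
    ¬ IsAcyclicAt k K j ↔ ∃ x ∈ chains k K j, boundary k x = 0 ∧ x ≠ 0 := by
  simp only [IsAcyclicAt, h, Submodule.mem_bot, exists_eq_left, map_zero, not_forall,
    exists_prop, eq_comm (a := (0 : Finset (Fin n) → k))]

lemma cone_mem_chains {v : Fin n} {j : ℕ} {x : Finset (Fin n) → k} (hx : x ∈ chains k K' j)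
    (hv : ∀ F ∈ K', F.card = j → v ∉ F → insert v F ∈ K) :
    cone k v x ∈ chains k K (j + 1) := by
  intro F hF
  have hvF : v ∈ F := by
    by_contra h
    exact hF (if_neg h)
  obtain ⟨hmem, hcard⟩ := hx _ (right_ne_zero_of_mul (by rwa [cone, if_pos hvF] at hF))
  refine ⟨?_, by rw [← Finset.card_erase_add_one hvF, hcard]⟩
  simpa [Finset.insert_erase hvF] using hv _ hmem hcard (Finset.notMem_erase v F)

lemma isAcyclicAt_of_insert_mem {v : Fin n} {j : ℕ}
    (hv : ∀ F ∈ K, F.card = j → v ∉ F → insert v F ∈ K) : IsAcyclicAt k K j :=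
  fun x hx hc => ⟨cone k v x, cone_mem_chains k hx hv,
    by rw [boundary_cone, hc, cone_zero, sub_zero]⟩

end Chains

section Decomposition

variable {K : Finset (Finset (Fin n))}

lemma mem_link_singleton {v : Fin n} {G : Finset (Fin n)} :
    G ∈ link K {v} ↔ G ∈ K ∧ v ∉ G ∧ insert v G ∈ K := by
  simp only [link, Finset.mem_filter, ← Finset.insert_eq, Finset.singleton_inter]
  split_ifs <;> simp_all

lemma mem_induced {W F : Finset (Fin n)} : F ∈ induced K W ↔ F ∈ K ∧ F ⊆ W :=
  Finset.mem_filter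

lemma mem_induced_compl_singleton {v : Fin n} {F : Finset (Fin n)} :
    F ∈ induced K {v}ᶜ ↔ F ∈ K ∧ v ∉ F := by
  simp [mem_induced, Finset.subset_iff]

lemma link_subset (F : Finset (Fin n)) : link K F ⊆ K := Finset.filter_subset _ _

lemma induced_subset (W : Finset (Fin n)) : induced K W ⊆ K := Finset.filter_subset _ _

lemma linkProj_mem_chains (hK : IsComplex K) {v : Fin n} {j : ℕ} {x : Finset (Fin n) → k}
    (hx : x ∈ chains k K (j + 1)) : linkProj k v x ∈ chains k (link K {v}) j := by
  intro F hF
  have hvF : v ∉ F := fun h => hF (if_pos h)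
  rw [linkProj, if_neg hvF] at hF
  obtain ⟨hmem, hcard⟩ := hx _ (right_ne_zero_of_mul hF)
  rw [Finset.card_insert_of_notMem hvF] at hcard
  exact ⟨mem_link_singleton.2 ⟨hK.2 _ hmem _ (Finset.subset_insert v F), hvF, hmem⟩,
    by omega⟩

lemma cone_linkProj_of_mem {v : Fin n} (x : Finset (Fin n) → k) {G : Finset (Fin n)}
    (hv : v ∈ G) : cone k v (linkProj k v x) G = x G := by
  rw [cone, if_pos hv, linkProj, if_neg (Finset.notMem_erase v G), Finset.insert_erase hv,
    ← mul_assoc, insSign_mul_self, one_mul]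

lemma cone_mem_chains_of_link {v : Fin n} {j : ℕ} {z : Finset (Fin n) → k}
    (hz : z ∈ chains k (link K {v}) j) : cone k v z ∈ chains k K (j + 1) :=
  cone_mem_chains k hz fun _ hF _ _ => (mem_link_singleton.1 hF).2.2

lemma apply_eq_zero_of_mem_chains_link {v : Fin n} {j : ℕ} {z : Finset (Fin n) → k}
    (hz : z ∈ chains k (link K {v}) j) {G : Finset (Fin n)} (hv : v ∈ G) : z G = 0 := by
  by_contra h
  exact (mem_link_singleton.1 (hz G h).1).2.1 hv

lemma apply_eq_zero_of_mem_chains_deletion {v : Fin n} {j : ℕ} {y : Finset (Fin n) → k}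
    (hy : y ∈ chains k (induced K {v}ᶜ) j) {G : Finset (Fin n)} (hv : v ∈ G) : y G = 0 := by
  by_contra h
  exact (mem_induced_compl_singleton.1 (hy G h).1).2 hv

/-- The Mayer–Vietoris step for `K = (K \ v) ∪ (v * lk v)`: a cycle `x` of `K` is homologous,
by the boundary of the cone over a filling of its link part, to a cycle of `K \ v`. -/
theorem isAcyclicAt_succ_of_link_of_deletion (hK : IsComplex K) {v : Fin n} {j : ℕ}
    (hlk : IsAcyclicAt k (link K {v}) j) (hdel : IsAcyclicAt k (induced K {v}ᶜ) (j + 1)) :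
    IsAcyclicAt k K (j + 1) := by
  intro x hx hcyc
  set z := linkProj k v x
  have hz : z ∈ chains k (link K {v}) j := linkProj_mem_chains k hK hx
  have hzcyc : boundary k z = 0 := by rw [boundary_linkProj, hcyc]; ext; simp [linkProj]
  obtain ⟨β, hβ, hβz⟩ := hlk z hz hzcyc
  set x' := x + β - cone k v z
  have hx' : x' ∈ chains k (induced K {v}ᶜ) (j + 1) := by
    intro G hG
    by_cases hvG : v ∈ G
    · have hzG : cone k v z G = x G := cone_linkProj_of_mem k x hvG
      exact absurd (by simp [x', hzG, apply_eq_zero_of_mem_chains_link k hβ hvG]) hG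
    have hmem : x' ∈ chains k K (j + 1) :=
      sub_mem (add_mem hx (chains_mono k (link_subset _) _ hβ)) (cone_mem_chains_of_link k hz)
    exact ⟨mem_induced_compl_singleton.2 ⟨(hmem G hG).1, hvG⟩, (hmem G hG).2⟩
  have hx'cyc : boundary k x' = 0 := by
    simp [x', hcyc, hβz, boundary_cone, hzcyc]
  obtain ⟨y, hy, hyx'⟩ := hdel x' hx' hx'cyc
  refine ⟨y - cone k v β, sub_mem (chains_mono k (induced_subset _) _ hy)
    (cone_mem_chains_of_link k hβ), ?_⟩
  rw [map_sub, hyx', boundary_cone, hβz]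
  simp only [x']
  abel

/-- A nonzero top cycle `z` of `lk v` bounds a chain `y` in `K \ v`, and `v * z - y` is then a
nonzero top cycle of `K`. -/
theorem not_isAcyclicAt_succ_of_link {v : Fin n} {j : ℕ}
    (htop : ∀ F ∈ K, F.card ≠ j + 2) (hlk : ¬ IsAcyclicAt k (link K {v}) j)
    (hdel : IsAcyclicAt k (induced K {v}ᶜ) j) : ¬ IsAcyclicAt k K (j + 1) := by
  have hlktop : chains k (link K {v}) (j + 1) = ⊥ := chains_eq_bot k fun F hF hcard => by
    obtain ⟨-, hvF, hins⟩ := mem_link_singleton.1 hF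
    exact htop _ hins (by rw [Finset.card_insert_of_notMem hvF, hcard])
  obtain ⟨z, hz, hzcyc, hz0⟩ := (not_isAcyclicAt_iff_of_chains_succ_eq_bot k hlktop).1 hlk
  have hzdel : z ∈ chains k (induced K {v}ᶜ) j := fun G hG =>
    ⟨mem_induced_compl_singleton.2 ⟨(link_subset _ (hz G hG).1),
      (mem_link_singleton.1 (hz G hG).1).2.1⟩, (hz G hG).2⟩
  obtain ⟨y, hy, hyz⟩ := hdel z hzdel hzcyc
  rw [not_isAcyclicAt_iff_of_chains_succ_eq_bot k (chains_eq_bot k htop)]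
  refine ⟨cone k v z - y, sub_mem (cone_mem_chains_of_link k hz)
    (chains_mono k (induced_subset _) _ hy), by rw [map_sub, boundary_cone, hzcyc, hyz]; simp, ?_⟩
  obtain ⟨G, hG⟩ := Function.ne_iff.1 hz0
  have hvG : v ∉ G := fun h => hG (apply_eq_zero_of_mem_chains_link k hz h)
  intro h0
  have := congrFun h0 (insert v G)
  rw [Pi.sub_apply, apply_eq_zero_of_mem_chains_deletion k hy (Finset.mem_insert_self v G),
    sub_zero, cone, if_pos (Finset.mem_insert_self v G), Finset.erase_insert hvG] at this
  have hs := insSign_mul_self k G v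
  simp_all

end Decomposition

section Matroid

variable {K : Finset (Finset (Fin n))}

noncomputable def rk (K : Finset (Finset (Fin n))) (W : Finset (Fin n)) : ℕ :=
  (induced K W).sup Finset.card

def IsMatroid (K : Finset (Finset (Fin n))) : Prop :=
  IsComplex K ∧ ∀ W : Finset (Fin n), ∀ F ∈ K, F ⊆ W → F.card < rk K W →
    ∃ v ∈ W, v ∉ F ∧ insert v F ∈ K

lemma card_le_rk {W F : Finset (Fin n)} (hF : F ∈ K) (hFW : F ⊆ W) : F.card ≤ rk K W :=
  Finset.le_sup (mem_induced.2 ⟨hF, hFW⟩)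

lemma rk_le_card (K : Finset (Finset (Fin n))) (W : Finset (Fin n)) : rk K W ≤ W.card :=
  Finset.sup_le fun _ hF => Finset.card_le_card (mem_induced.1 hF).2

lemma rk_mono (K : Finset (Finset (Fin n))) {W W' : Finset (Fin n)} (h : W ⊆ W') :
    rk K W ≤ rk K W' :=
  Finset.sup_le fun _ hF => card_le_rk (mem_induced.1 hF).1 ((mem_induced.1 hF).2.trans h)

lemma rk_univ_eq_of_dimOf {d : ℕ} (h : dimOf K = (d : ℤ) - 1) : rk K Finset.univ = d := by
  have hK : induced K Finset.univ = K := Finset.filter_true_of_mem fun F _ => F.subset_univ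
  rw [dimOf, ← hK] at h
  exact_mod_cast sub_left_injective h

lemma rk_induced (K : Finset (Finset (Fin n))) (W U : Finset (Fin n)) :
    rk (induced K W) U = rk K (W ∩ U) := by
  simp only [rk, induced, Finset.filter_filter, Finset.subset_inter_iff]

namespace IsMatroid

variable (hM : IsMatroid K)
include hM

lemma exists_extend {F W : Finset (Fin n)} (hF : F ∈ K) (hFW : F ⊆ W) :
    ∃ B ∈ K, F ⊆ B ∧ B ⊆ W ∧ B.card = rk K W := by
  obtain ⟨B, hB, hmax⟩ := Finset.exists_max_image ((induced K W).filter (F ⊆ ·)) Finset.card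
    ⟨F, Finset.mem_filter.2 ⟨mem_induced.2 ⟨hF, hFW⟩, subset_rfl⟩⟩
  obtain ⟨hBK, hBW⟩ := mem_induced.1 (Finset.mem_filter.1 hB).1
  refine ⟨B, hBK, (Finset.mem_filter.1 hB).2, hBW, (card_le_rk hBK hBW).antisymm ?_⟩
  by_contra hlt
  obtain ⟨v, hvW, hvB, hins⟩ := hM.2 W B hBK hBW (not_le.1 hlt)
  have := hmax (insert v B) (Finset.mem_filter.2 ⟨mem_induced.2 ⟨hins,
    Finset.insert_subset hvW hBW⟩, (Finset.mem_filter.1 hB).2.trans (Finset.subset_insert v B)⟩)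
  rw [Finset.card_insert_of_notMem hvB] at this
  omega

lemma exists_basis (W : Finset (Fin n)) : ∃ B ∈ K, B ⊆ W ∧ B.card = rk K W := by
  obtain ⟨B, hB, -, hBW, hBc⟩ := hM.exists_extend hM.1.1 (Finset.empty_subset W)
  exact ⟨B, hB, hBW, hBc⟩

/-- Submodularity: extend a basis of `A ∩ B` to one of `A ∪ B` and split it between `A`
and `B`. -/
lemma rk_union_add_rk_inter_le (A B : Finset (Fin n)) :
    rk K (A ∪ B) + rk K (A ∩ B) ≤ rk K A + rk K B := by
  obtain ⟨I, hI, hIAB, hIc⟩ := hM.exists_basis (A ∩ B)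
  obtain ⟨J, hJ, hIJ, hJAB, hJc⟩ :=
    hM.exists_extend hI (hIAB.trans (Finset.inter_subset_union))
  have hA : (J ∩ A).card ≤ rk K A :=
    card_le_rk (hM.1.2 J hJ _ Finset.inter_subset_left) Finset.inter_subset_right
  have hB : (J ∩ B).card ≤ rk K B :=
    card_le_rk (hM.1.2 J hJ _ Finset.inter_subset_left) Finset.inter_subset_right
  have hsplit := Finset.card_union_add_card_inter (J ∩ A) (J ∩ B)
  rw [← Finset.inter_union_distrib_left, Finset.inter_eq_left.2 hJAB] at hsplit
  have hI' : I.card ≤ (J ∩ A ∩ (J ∩ B)).card := Finset.card_le_card fun u hu => by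
    have := hIAB hu
    simp_all [hIJ hu]
  omega

lemma rk_union_le (A B : Finset (Fin n)) : rk K (A ∪ B) ≤ rk K A + B.card := by
  have := hM.rk_union_add_rk_inter_le A B
  have := rk_le_card K B
  omega

lemma rk_union_eq_of_subset {A W : Finset (Fin n)} (hAW : A ⊆ W) (h : rk K A = rk K W)
    (X : Finset (Fin n)) : rk K (W ∪ X) = rk K (A ∪ X) := by
  have hsub := hM.rk_union_add_rk_inter_le W (A ∪ X)
  have h1 : W ∪ (A ∪ X) = W ∪ X := by
    rw [← Finset.union_assoc, Finset.union_eq_left.2 hAW]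
  have h2 := rk_mono K (Finset.subset_inter hAW (Finset.subset_union_left (s₂ := X)))
  have h3 := rk_mono K (Finset.union_subset_union_left (t := X) hAW)
  rw [h1] at hsub
  omega

lemma rk_link {v : Fin n} (hv : {v} ∈ K) (U : Finset (Fin n)) :
    rk (link K {v}) U + 1 = rk K (insert v U) := by
  refine le_antisymm ?_ ?_
  · obtain ⟨G, hG, hGU⟩ := Finset.exists_mem_eq_sup (induced (link K {v}) U)
      ⟨∅, mem_induced.2 ⟨mem_link_singleton.2 ⟨hM.1.1, Finset.notMem_empty v, hv⟩,
        U.empty_subset⟩⟩ Finset.card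
    obtain ⟨hGlk, hGsub⟩ := mem_induced.1 hG
    obtain ⟨-, hvG, hins⟩ := mem_link_singleton.1 hGlk
    have := card_le_rk hins (Finset.insert_subset_insert v hGsub)
    rw [Finset.card_insert_of_notMem hvG] at this
    rw [rk, hGU]
    exact this
  · obtain ⟨B, hB, hvB, hBU, hBc⟩ := hM.exists_extend hv      (Finset.singleton_subset_iff.2 (Finset.mem_insert_self v U))
    have hvB' : v ∈ B := Finset.singleton_subset_iff.1 hvB
    have hBe : B.erase v ∈ link K {v} := mem_link_singleton.2
      ⟨hM.1.2 B hB _ (Finset.erase_subset v B), Finset.notMem_erase v B,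
        by rwa [Finset.insert_erase hvB']⟩
    have := card_le_rk hBe (fun u hu => by
      have := hBU (Finset.mem_of_mem_erase hu)
      rcases Finset.mem_insert.1 this with h | h
      · exact absurd h (Finset.ne_of_mem_erase hu)
      · exact h)
    rw [Finset.card_erase_of_mem hvB'] at this
    omega

lemma isMatroid_induced (W : Finset (Fin n)) : IsMatroid (induced K W) := by
  refine ⟨⟨mem_induced.2 ⟨hM.1.1, W.empty_subset⟩, fun F hF G hGF => ?_⟩,
    fun U F hF hFU h => ?_⟩
  · exact mem_induced.2 ⟨hM.1.2 F (mem_induced.1 hF).1 G hGF, hGF.trans (mem_induced.1 hF).2⟩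
  rw [rk_induced] at h
  obtain ⟨hFK, hFW⟩ := mem_induced.1 hF
  obtain ⟨v, hv, hvF, hins⟩ := hM.2 (W ∩ U) F hFK (Finset.subset_inter hFW hFU) h
  exact ⟨v, Finset.mem_of_mem_inter_right hv, hvF,
    mem_induced.2 ⟨hins, Finset.insert_subset (Finset.mem_of_mem_inter_left hv) hFW⟩⟩

lemma isMatroid_link {v : Fin n} (hv : {v} ∈ K) : IsMatroid (link K {v}) := by
  refine ⟨⟨mem_link_singleton.2 ⟨hM.1.1, Finset.notMem_empty v, hv⟩,
    fun F hF G hGF => ?_⟩, fun W F hF hFW h => ?_⟩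
  · obtain ⟨hFK, hvF, hins⟩ := mem_link_singleton.1 hF
    exact mem_link_singleton.2 ⟨hM.1.2 F hFK G hGF, fun h => hvF (hGF h),
      hM.1.2 _ hins _ (Finset.insert_subset_insert v hGF)⟩
  obtain ⟨hFK, hvF, hins⟩ := mem_link_singleton.1 hF
  have hlt : (insert v F).card < rk K (insert v W) := by
    rw [Finset.card_insert_of_notMem hvF, ← hM.rk_link hv]
    omega
  obtain ⟨u, hu, huF, hins'⟩ := hM.2 _ _ hins (Finset.insert_subset_insert v hFW) hlt
  have huv : u ≠ v := fun h => huF (h ▸ Finset.mem_insert_self v F)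
  have huF' : u ∉ F := fun h => huF (Finset.mem_insert_of_mem h)
  rw [Finset.insert_comm] at hins'
  refine ⟨u, (Finset.mem_insert.1 hu).resolve_left huv, huF', mem_link_singleton.2
    ⟨hM.1.2 _ hins' _ (Finset.subset_insert v _), ?_, hins'⟩⟩
  rw [Finset.mem_insert, not_or]
  exact ⟨huv.symm, hvF⟩

/-- A coloop lies in every basis, so every face extends by it. -/
lemma insert_mem_of_coloop {v : Fin n} (hv : rk K (Finset.univ.erase v) ≠ rk K Finset.univ)
    {F : Finset (Fin n)} (hF : F ∈ K) : insert v F ∈ K := by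
  obtain ⟨B, hB, hFB, -, hBc⟩ := hM.exists_extend hF F.subset_univ
  have hvB : v ∈ B := by
    by_contra hvB
    have := card_le_rk hB (Finset.subset_erase.2 ⟨B.subset_univ, hvB⟩)
    have := rk_mono K (Finset.erase_subset v (Finset.univ : Finset (Fin n)))
    omega
  exact hM.1.2 B hB _ (Finset.insert_subset hvB hFB)

end IsMatroid

lemma isMatroid_of_isPure (hK : IsComplex K) (hpure : ∀ W, IsPure (induced K W)) :
    IsMatroid K := by
  refine ⟨hK, fun W F hF hFW hlt => ?_⟩
  have hFW' : F ∈ induced K W := mem_induced.2 ⟨hF, hFW⟩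
  by_cases hmax : ∀ G ∈ induced K W, F ⊆ G → G = F
  · have := hpure W F hFW' hmax
    rw [dimOf] at this
    change (F.card : ℤ) = (rk K W : ℤ) - 1 + 1 at this
    omega
  push Not at hmax
  obtain ⟨G, hG, hFG, hGF⟩ := hmax
  obtain ⟨v, hvG, hvF⟩ :=
    Finset.exists_of_ssubset (Finset.ssubset_iff_subset_ne.2 ⟨hFG, hGF.symm⟩)
  obtain ⟨hGK, hGW⟩ := mem_induced.1 hG
  exact ⟨v, hGW hvG, hvF, hK.2 G hGK _ (Finset.insert_subset hvG hFG)⟩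

end Matroid

section Homology

variable {K : Finset (Finset (Fin n))}

noncomputable def vertices (K : Finset (Finset (Fin n))) : Finset (Fin n) :=
  Finset.univ.filter fun v => {v} ∈ K

def IsColoopFree (K : Finset (Finset (Fin n))) (W : Finset (Fin n)) : Prop :=
  ∀ w ∈ W, rk K (W.erase w) = rk K W

lemma card_vertices_lt_of_subset {K' : Finset (Finset (Fin n))} (hK' : K' ⊆ K) {v : Fin n}
    (hv : {v} ∈ K) (hvK' : {v} ∉ K') : (vertices K').card < (vertices K).card :=
  Finset.card_lt_card <| (Finset.ssubset_iff_of_subset fun u hu => by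
    simp only [vertices, Finset.mem_filter] at hu ⊢
    exact ⟨hu.1, hK' hu.2⟩).2
    ⟨v, by simpa [vertices] using hv, by simpa [vertices] using hvK'⟩

lemma card_vertices_link_lt {v : Fin n} (hv : {v} ∈ K) :
    (vertices (link K {v})).card < (vertices K).card :=
  card_vertices_lt_of_subset (link_subset _) hv fun h =>
    (mem_link_singleton.1 h).2.1 (Finset.mem_singleton_self v)

lemma card_vertices_deletion_lt {v : Fin n} (hv : {v} ∈ K) :
    (vertices (induced K {v}ᶜ)).card < (vertices K).card :=
  card_vertices_lt_of_subset (induced_subset _) hv fun h =>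
    (mem_induced_compl_singleton.1 h).2 (Finset.mem_singleton_self v)

lemma rk_deletion (K : Finset (Finset (Fin n))) (v : Fin n) :
    rk (induced K {v}ᶜ) Finset.univ = rk K (Finset.univ.erase v) := by
  rw [rk_induced, Finset.inter_univ, Finset.compl_singleton]

lemma isColoopFree_induced_univ_iff {W : Finset (Fin n)} :
    IsColoopFree (induced K W) Finset.univ ↔ IsColoopFree K W := by
  have herase : ∀ w, W ∩ Finset.univ.erase w = W.erase w := fun w => by
    ext; simp [and_comm]
  simp only [IsColoopFree, rk_induced, Finset.inter_univ, herase]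
  refine ⟨fun h w hw => h w (Finset.mem_univ w), fun h w _ => ?_⟩
  by_cases hw : w ∈ W
  · exact h w hw
  · rw [Finset.erase_eq_of_notMem hw]

namespace IsMatroid

section

variable (hM : IsMatroid K)
include hM

lemma exists_vertex (h : 0 < rk K Finset.univ) : ∃ v, {v} ∈ K := by
  obtain ⟨B, hB, -, hBc⟩ := hM.exists_basis Finset.univ
  obtain ⟨v, hv⟩ := Finset.card_pos.1 (hBc ▸ h)
  exact ⟨v, hM.1.2 B hB _ (Finset.singleton_subset_iff.2 hv)⟩

lemma rk_link_univ {v : Fin n} (hv : {v} ∈ K) :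
    rk (link K {v}) Finset.univ + 1 = rk K Finset.univ := by
  rw [hM.rk_link hv, Finset.insert_eq_of_mem (Finset.mem_univ v)]

lemma isColoopFree_link {v : Fin n} (hv : {v} ∈ K) (hfree : IsColoopFree K Finset.univ) :
    IsColoopFree (link K {v}) Finset.univ := by
  intro w _
  have h := hM.rk_link hv (Finset.univ.erase w)
  have h' := hM.rk_link_univ hv
  by_cases hwv : w = v
  · subst hwv
    rw [Finset.insert_erase (Finset.mem_univ w)] at h
    omega
  · rw [Finset.insert_eq_of_mem (Finset.mem_erase.2 ⟨Ne.symm hwv, Finset.mem_univ v⟩),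
      hfree w (Finset.mem_univ w)] at h
    omega

end

/-- Induct on the vertices: a coloop makes `K` a cone, and otherwise the Mayer–Vietoris step
at a vertex applies. -/
theorem isAcyclicAt_of_lt_rk {K : Finset (Finset (Fin n))} (hM : IsMatroid K) {j : ℕ}
    (hj : j < rk K Finset.univ) : IsAcyclicAt k K j := by
  obtain ⟨v, hv⟩ := hM.exists_vertex (by omega)
  by_cases hco : rk K (Finset.univ.erase v) = rk K Finset.univ
  swap
  · exact isAcyclicAt_of_insert_mem k fun F hF _ _ => hM.insert_mem_of_coloop hco hF
  cases j with
  | zero => exact isAcyclicAt_of_insert_mem k fun F _ hF _ => by rwa [Finset.card_eq_zero.1 hF]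
  | succ j =>
    have := hM.rk_link_univ hv
    exact isAcyclicAt_succ_of_link_of_deletion k hM.1
      (isAcyclicAt_of_lt_rk (hM.isMatroid_link hv) (by omega))
      (isAcyclicAt_of_lt_rk (hM.isMatroid_induced _) (by rw [rk_deletion, hco]; omega))
termination_by (vertices K).card
decreasing_by
  · exact card_vertices_link_lt hv
  · exact card_vertices_deletion_lt hv

theorem not_isAcyclicAt_rk (hM : IsMatroid K) (hfree : IsColoopFree K Finset.univ) :
    ¬ IsAcyclicAt k K (rk K Finset.univ) := by
  induction hd : rk K Finset.univ generalizing K with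
  | zero =>
    have htop : chains k K 1 = ⊥ := chains_eq_bot k fun F hF hcard => by
      have := card_le_rk hF F.subset_univ
      omega
    rw [not_isAcyclicAt_iff_of_chains_succ_eq_bot k htop]
    refine ⟨Pi.single ∅ 1, fun F hF => ?_,
      boundary_eq_zero_of_mem_chains_zero k (K := K) ?_, ?_⟩
    · obtain rfl : F = ∅ := by by_contra h; exact hF (Pi.single_eq_of_ne h _)
      exact ⟨hM.1.1, rfl⟩
    · intro F hF
      obtain rfl : F = ∅ := by by_contra h; exact hF (Pi.single_eq_of_ne h _)
      exact ⟨hM.1.1, rfl⟩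
    · exact fun h => one_ne_zero (congrFun h ∅ ▸ (Pi.single_eq_same _ _).symm)
  | succ j ih =>
    obtain ⟨v, hv⟩ := hM.exists_vertex (by omega)
    have hlk := hM.rk_link_univ hv
    refine not_isAcyclicAt_succ_of_link k (fun F hF hcard => ?_)
      (ih (hM.isMatroid_link hv) (hM.isColoopFree_link hv hfree) (by omega))
      ((hM.isMatroid_induced _).isAcyclicAt_of_lt_rk k
        (by rw [rk_deletion, hfree v (Finset.mem_univ v)]; omega))
    have := card_le_rk hF F.subset_univ
    omega

theorem not_isAcyclicAt_iff (hM : IsMatroid K) (j : ℕ) :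
    ¬ IsAcyclicAt k K j ↔ j = rk K Finset.univ ∧ IsColoopFree K Finset.univ := by
  refine ⟨fun h => ?_, fun ⟨hj, hfree⟩ => hj ▸ hM.not_isAcyclicAt_rk k hfree⟩
  have hle : j ≤ rk K Finset.univ := by
    by_contra hlt
    refine h (isAcyclicAt_of_chains_eq_bot k (chains_eq_bot k fun F hF hcard => ?_))
    have := card_le_rk hF F.subset_univ
    omega
  refine ⟨hle.eq_or_lt.resolve_right fun hlt => h (hM.isAcyclicAt_of_lt_rk k hlt),
    fun w _ => ?_⟩
  by_contra hco
  exact h (isAcyclicAt_of_insert_mem k fun F hF _ _ => hM.insert_mem_of_coloop hco hF)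

theorem homNonzero_iff (hM : IsMatroid K) (p : ℤ) :
    homNonzero k K p ↔ p = (rk K Finset.univ : ℤ) - 1 ∧ IsColoopFree K Finset.univ := by
  rw [MultConj.homNonzero_iff]
  simp only [hM.not_isAcyclicAt_iff k]
  constructor
  · rintro ⟨j, hj, rfl, hfree⟩
    exact ⟨by omega, hfree⟩
  · rintro ⟨hp, hfree⟩
    exact ⟨_, by omega, rfl, hfree⟩

end IsMatroid

end Homology

section Coloops

variable {K : Finset (Finset (Fin n))}

noncomputable def nonColoops (K : Finset (Finset (Fin n))) (S : Finset (Fin n)) :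
    Finset (Fin n) :=
  S.filter fun v => rk K (S.erase v) = rk K S

noncomputable def nullity (K : Finset (Finset (Fin n))) (S : Finset (Fin n)) : ℕ :=
  S.card - rk K S

lemma mem_nonColoops {S : Finset (Fin n)} {v : Fin n} :
    v ∈ nonColoops K S ↔ v ∈ S ∧ rk K (S.erase v) = rk K S :=
  Finset.mem_filter

lemma mem_nonColoops_of_notMem_basis {B S : Finset (Fin n)} (hB : B ∈ K) (hBS : B ⊆ S)
    (hBc : B.card = rk K S) {v : Fin n} (hv : v ∈ S) (hvB : v ∉ B) : v ∈ nonColoops K S :=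
  mem_nonColoops.2 ⟨hv, (rk_mono K (S.erase_subset v)).antisymm
    (hBc ▸ card_le_rk hB (Finset.subset_erase.2 ⟨hBS, hvB⟩))⟩

namespace IsMatroid

variable (hM : IsMatroid K)
include hM

lemma rk_erase_eq_of_subset {A S : Finset (Fin n)} (hAS : A ⊆ S) {v : Fin n} (hvA : v ∈ A)
    (h : rk K (A.erase v) = rk K A) : rk K (S.erase v) = rk K S := by
  have hsub := hM.rk_union_add_rk_inter_le A (S.erase v)
  rw [Finset.union_erase_of_mem hvA, Finset.union_eq_right.2 hAS,
    Finset.inter_erase, Finset.inter_eq_left.2 hAS] at hsub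
  have := rk_mono K (S.erase_subset v)
  omega

lemma subset_nonColoops {W S : Finset (Fin n)} (hW : IsColoopFree K W) (hWS : W ⊆ S) :
    W ⊆ nonColoops K S :=
  fun w hw => mem_nonColoops.2 ⟨hWS hw, hM.rk_erase_eq_of_subset hWS hw (hW w hw)⟩

/-- The coloops of `S` lie in every basis of `S`, and each of them adds one to the rank. -/
lemma rk_nonColoops_add_card_sdiff (S : Finset (Fin n)) :
    rk K (nonColoops K S) + (S \ nonColoops K S).card = rk K S := by
  set N := nonColoops K S
  have hNS : N ⊆ S := Finset.filter_subset _ S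
  refine le_antisymm ?_ ?_
  · obtain ⟨I, hI, hIN, hIc⟩ := hM.exists_basis N
    obtain ⟨B, hB, hIB, hBS, hBc⟩ := hM.exists_extend hI (hIN.trans hNS)
    have hCB : S \ N ⊆ B \ I := fun v hv => by
      obtain ⟨hvS, hvN⟩ := Finset.mem_sdiff.1 hv
      exact Finset.mem_sdiff.2 ⟨by_contra fun hvB =>
        hvN (mem_nonColoops_of_notMem_basis hB hBS hBc hvS hvB), fun hvI => hvN (hIN hvI)⟩
    have := Finset.card_le_card hCB
    rw [Finset.card_sdiff_of_subset hIB] at this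
    have := Finset.card_le_card hIB
    omega
  · calc rk K S = rk K (N ∪ S \ N) := by rw [Finset.union_sdiff_of_subset hNS]
      _ ≤ _ := hM.rk_union_le _ _

lemma nullity_nonColoops (S : Finset (Fin n)) : nullity K (nonColoops K S) = nullity K S := by
  have h := hM.rk_nonColoops_add_card_sdiff S
  have hNS : nonColoops K S ⊆ S := Finset.filter_subset _ S
  have := Finset.card_sdiff_of_subset hNS
  have := Finset.card_le_card hNS
  have := rk_le_card K (nonColoops K S)
  unfold nullity
  omega

lemma isColoopFree_nonColoops (S : Finset (Fin n)) : IsColoopFree K (nonColoops K S) := by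
  intro w hw
  have h2 := hM.rk_nonColoops_add_card_sdiff S
  set N := nonColoops K S
  have hNS : N ⊆ S := Finset.filter_subset _ S
  have hsplit : S.erase w = N.erase w ∪ S \ N := by
    ext u
    simp only [Finset.mem_erase, Finset.mem_union, Finset.mem_sdiff]
    constructor
    · rintro ⟨huw, huS⟩
      by_cases huN : u ∈ N <;> simp_all
    · rintro (⟨huw, huN⟩ | ⟨huS, huN⟩)
      · exact ⟨huw, hNS huN⟩
      · exact ⟨fun h => huN (h ▸ hw), huS⟩
  have h1 := hM.rk_union_le (N.erase w) (S \ N)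
  rw [← hsplit, (mem_nonColoops.1 hw).2] at h1
  have := rk_mono K (N.erase_subset w)
  omega

/-- A coloop-free `W` is the set of non-coloops of `W ∪ B`, for a basis `B` of the whole
complex extending a basis of `W`. -/
lemma exists_spanning_nonColoops_eq {W : Finset (Fin n)} (hW : IsColoopFree K W) :
    ∃ S, rk K S = rk K Finset.univ ∧ nullity K S = nullity K W ∧ nonColoops K S = W := by
  obtain ⟨I, hI, hIW, hIc⟩ := hM.exists_basis W
  obtain ⟨B, hB, hIB, -, hBc⟩ := hM.exists_extend hI I.subset_univ
  have hrkS : rk K (W ∪ B) = rk K Finset.univ :=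
    (rk_mono K (W ∪ B).subset_univ).antisymm (hBc ▸ card_le_rk hB Finset.subset_union_right)
  have hWB : W ∩ B = I := (Finset.eq_of_subset_of_card_le (Finset.subset_inter hIW hIB)
    (hIc ▸ card_le_rk (hM.1.2 B hB _ Finset.inter_subset_right) Finset.inter_subset_left)).symm
  refine ⟨W ∪ B, hrkS, ?_, ?_⟩
  · have := Finset.card_union_add_card_inter W B
    rw [hWB] at this
    have := rk_le_card K W
    unfold nullity
    omega
  refine Finset.Subset.antisymm (fun v hv => ?_) (hM.subset_nonColoops hW Finset.subset_union_left)
  by_contra hvW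
  obtain ⟨hvS, hvrk⟩ := mem_nonColoops.1 hv
  have hvB : v ∈ B := (Finset.mem_union.1 hvS).resolve_left hvW
  have hIBv : I ⊆ B.erase v := Finset.subset_erase.2 ⟨hIB, fun h => hvW (hIW h)⟩
  have herase : (W ∪ B).erase v = W ∪ B.erase v := by
    rw [Finset.erase_union_distrib, Finset.erase_eq_of_notMem hvW]
  have hrkI : rk K I = rk K W := le_antisymm (rk_mono K hIW) (hIc ▸ card_le_rk hI subset_rfl)
  rw [herase, hM.rk_union_eq_of_subset hIW hrkI, Finset.union_eq_right.2 hIBv, hrkS] at hvrk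
  have := rk_le_card K (B.erase v)
  rw [Finset.card_erase_of_mem hvB] at this
  have := Finset.card_pos.2 ⟨v, hvB⟩
  omega

end IsMatroid

end Coloops

section Counting

variable {K : Finset (Finset (Fin n))}

noncomputable def basesIn (K : Finset (Finset (Fin n))) (S : Finset (Fin n)) :
    Finset (Finset (Fin n)) :=
  (induced K S).filter fun B => B.card = rk K Finset.univ

/-- For spanning `S`, the number of ways to shrink `S` to a basis by deleting one element at a
time while staying spanning: such a chain ends in a basis `B ⊆ S` and orders `S \ B`. -/
noncomputable def flagCount (K : Finset (Finset (Fin n))) (S : Finset (Fin n)) : ℕ :=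
  (nullity K S).factorial * (basesIn K S).card

lemma mem_basesIn {S B : Finset (Fin n)} :
    B ∈ basesIn K S ↔ B ∈ K ∧ B ⊆ S ∧ B.card = rk K Finset.univ := by
  simp [basesIn, mem_induced, and_assoc]

lemma basesIn_erase (S : Finset (Fin n)) (v : Fin n) :
    basesIn K (S.erase v) = (basesIn K S).filter (v ∉ ·) := by
  ext B
  simp only [Finset.mem_filter, mem_basesIn, Finset.subset_erase]
  tauto

lemma sum_card_basesIn_erase (S : Finset (Fin n)) :
    ∑ v ∈ S, (basesIn K (S.erase v)).card =
      (S.card - rk K Finset.univ) * (basesIn K S).card := by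
  simp only [basesIn_erase, Finset.card_filter]
  rw [Finset.sum_comm, mul_comm, ← smul_eq_mul, ← Finset.sum_const]
  refine Finset.sum_congr rfl fun B hB => ?_
  obtain ⟨-, hBS, hBc⟩ := mem_basesIn.1 hB
  rw [← Finset.card_filter, ← hBc, ← Finset.card_sdiff_of_subset hBS, Finset.sdiff_eq_filter]

lemma basesIn_erase_eq_empty {S : Finset (Fin n)} {v : Fin n} (hv : v ∈ S)
    (hvN : v ∉ nonColoops K S) : basesIn K (S.erase v) = ∅ := by
  refine Finset.eq_empty_of_forall_notMem fun B hB => hvN (mem_nonColoops.2 ⟨hv, ?_⟩)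
  obtain ⟨hBK, hBS, hBc⟩ := mem_basesIn.1 hB
  have := card_le_rk hBK hBS
  have := rk_mono K (S.erase_subset v)
  have := rk_mono K S.subset_univ
  omega

lemma nullity_erase {S : Finset (Fin n)} {v : Fin n} (hv : v ∈ nonColoops K S) :
    nullity K (S.erase v) + 1 = nullity K S := by
  obtain ⟨hvS, hrk⟩ := mem_nonColoops.1 hv
  have := rk_le_card K (S.erase v)
  rw [Finset.card_erase_of_mem hvS, hrk] at this
  unfold nullity
  rw [hrk, Finset.card_erase_of_mem hvS]
  have := Finset.card_pos.2 ⟨v, hvS⟩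
  omega

lemma nullity_le_nullity_univ {S : Finset (Fin n)} (hS : rk K S = rk K Finset.univ) :
    nullity K S ≤ nullity K Finset.univ := by
  unfold nullity
  rw [hS]
  exact Nat.sub_le_sub_right (Finset.card_le_univ S) _

namespace IsMatroid

variable (hM : IsMatroid K)
include hM

lemma flagCount_of_nullity_eq_zero {S : Finset (Fin n)} (hS : rk K S = rk K Finset.univ)
    (h0 : nullity K S = 0) : flagCount K S = 1 := by
  have hcard : S.card = rk K S := le_antisymm (by unfold nullity at h0; omega) (rk_le_card K S)
  have hbases : basesIn K S = {S} := by
    ext B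
    rw [mem_basesIn, Finset.mem_singleton]
    refine ⟨fun ⟨_, hBS, hBc⟩ => Finset.eq_of_subset_of_card_le hBS (by omega), ?_⟩
    rintro rfl
    obtain ⟨B, hB, hBS, hBc⟩ := hM.exists_basis B
    exact ⟨Finset.eq_of_subset_of_card_le hBS (by omega) ▸ hB, subset_rfl, by omega⟩
  rw [flagCount, h0, hbases, Finset.card_singleton, Nat.factorial_zero]

end IsMatroid

lemma flagCount_eq_sum {S : Finset (Fin n)} (hS : rk K S = rk K Finset.univ)
    (h : 0 < nullity K S) :
    flagCount K S = ∑ v ∈ nonColoops K S, flagCount K (S.erase v) := by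
  obtain ⟨i, hi⟩ := Nat.exists_eq_add_one_of_ne_zero h.ne'
  have hsum : ∑ v ∈ nonColoops K S, (basesIn K (S.erase v)).card
      = ∑ v ∈ S, (basesIn K (S.erase v)).card :=
    Finset.sum_subset (Finset.filter_subset _ S) fun v hv hvN => by
      rw [basesIn_erase_eq_empty hv hvN, Finset.card_empty]
  have hnull : ∀ v ∈ nonColoops K S, nullity K (S.erase v) = i := fun v hv => by
    have := nullity_erase hv
    omega
  rw [Finset.sum_congr rfl fun v hv => by rw [flagCount, hnull v hv], ← Finset.mul_sum, hsum,
    sum_card_basesIn_erase, flagCount, hi, Nat.factorial_succ, ← hi, nullity, hS]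
  ring

lemma flagCount_univ (K : Finset (Finset (Fin n))) :
    flagCount K Finset.univ = (n - rk K Finset.univ).factorial * fcount K (rk K Finset.univ) := by
  rw [flagCount, nullity, Finset.card_univ, Fintype.card_fin, fcount]
  congr 2
  ext B
  simp [mem_basesIn]

end Counting

section Bounds

variable {K : Finset (Finset (Fin n))} {β : ℕ → ℕ}

lemma rk_erase_eq_of_mem_nonColoops {S : Finset (Fin n)} {v : Fin n}
    (hv : v ∈ nonColoops K S) (hS : rk K S = rk K Finset.univ) :
    rk K (S.erase v) = rk K Finset.univ :=
  (mem_nonColoops.1 hv).2.trans hS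

lemma mem_nonColoops_of_spanning_subset {S₀ S : Finset (Fin n)}
    (hS₀ : rk K S₀ = rk K Finset.univ) (hsub : S₀ ⊆ S) {v : Fin n} (hvS : v ∈ S)
    (hvS₀ : v ∉ S₀) : v ∈ nonColoops K S := by
  refine mem_nonColoops.2 ⟨hvS, le_antisymm (rk_mono K (S.erase_subset v)) ?_⟩
  calc rk K S ≤ rk K Finset.univ := rk_mono K S.subset_univ
    _ = rk K S₀ := hS₀.symm
    _ ≤ rk K (S.erase v) := rk_mono K (Finset.subset_erase.2 ⟨hsub, hvS₀⟩)

lemma prod_pos_of_le_nullity {S : Finset (Fin n)} (hS : rk K S = rk K Finset.univ)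
    (hβ : ∀ t ∈ Finset.Icc 1 (nullity K Finset.univ), 0 < β t) {i : ℕ}
    (hi : i ≤ nullity K S) : 0 < ∏ t ∈ Finset.Icc 1 i, β t :=
  Finset.prod_pos fun t ht => hβ t (Finset.mem_Icc.2 ⟨(Finset.mem_Icc.1 ht).1,
    (Finset.mem_Icc.1 ht).2.trans (hi.trans (nullity_le_nullity_univ hS))⟩)

namespace IsMatroid

variable (hM : IsMatroid K)
include hM

theorem prod_le_flagCount
    (hβ : ∀ S, rk K S = rk K Finset.univ → 0 < nullity K S →
      β (nullity K S) ≤ (nonColoops K S).card)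
    {S : Finset (Fin n)} (hS : rk K S = rk K Finset.univ) :
    ∏ t ∈ Finset.Icc 1 (nullity K S), β t ≤ flagCount K S := by
  induction hi : nullity K S generalizing S with
  | zero => simp [hM.flagCount_of_nullity_eq_zero hS hi]
  | succ i ih =>
    rw [flagCount_eq_sum hS (by omega), Finset.prod_Icc_succ_top (by omega)]
    calc (∏ t ∈ Finset.Icc 1 i, β t) * β (i + 1)
        ≤ (∏ t ∈ Finset.Icc 1 i, β t) * (nonColoops K S).card :=
          Nat.mul_le_mul_left _ (hi ▸ hβ S hS (by omega))
      _ = ∑ v ∈ nonColoops K S, ∏ t ∈ Finset.Icc 1 i, β t := by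
          rw [Finset.sum_const, smul_eq_mul, mul_comm]
      _ ≤ ∑ v ∈ nonColoops K S, flagCount K (S.erase v) :=
          Finset.sum_le_sum fun v hv => ih (rk_erase_eq_of_mem_nonColoops hv hS)
            (by have := nullity_erase hv; omega)

theorem flagCount_le_prod
    (hβ : ∀ S, rk K S = rk K Finset.univ → 0 < nullity K S →
      (nonColoops K S).card ≤ β (nullity K S))
    {S : Finset (Fin n)} (hS : rk K S = rk K Finset.univ) :
    flagCount K S ≤ ∏ t ∈ Finset.Icc 1 (nullity K S), β t := by
  induction hi : nullity K S generalizing S with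
  | zero => simp [hM.flagCount_of_nullity_eq_zero hS hi]
  | succ i ih =>
    rw [flagCount_eq_sum hS (by omega), Finset.prod_Icc_succ_top (by omega)]
    calc ∑ v ∈ nonColoops K S, flagCount K (S.erase v)
        ≤ ∑ v ∈ nonColoops K S, ∏ t ∈ Finset.Icc 1 i, β t :=
          Finset.sum_le_sum fun v hv => ih (rk_erase_eq_of_mem_nonColoops hv hS)
            (by have := nullity_erase hv; omega)
      _ = (∏ t ∈ Finset.Icc 1 i, β t) * (nonColoops K S).card := by
          rw [Finset.sum_const, smul_eq_mul, mul_comm]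
      _ ≤ (∏ t ∈ Finset.Icc 1 i, β t) * β (i + 1) :=
          Nat.mul_le_mul_left _ (hi ▸ hβ S hS (by omega))

/-- A strict inequality at one spanning set `S₀` propagates to every spanning `S ⊇ S₀`: an
element of `S \ S₀` is a non-coloop of `S` whose deletion still contains `S₀`. -/
theorem prod_lt_flagCount
    (hβ : ∀ S, rk K S = rk K Finset.univ → 0 < nullity K S →
      β (nullity K S) ≤ (nonColoops K S).card)
    (hβpos : ∀ t ∈ Finset.Icc 1 (nullity K Finset.univ), 0 < β t)
    {S₀ : Finset (Fin n)} (hS₀ : rk K S₀ = rk K Finset.univ) (h0 : 0 < nullity K S₀)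
    (hlt : β (nullity K S₀) < (nonColoops K S₀).card)
    {S : Finset (Fin n)} (hS : rk K S = rk K Finset.univ) (hsub : S₀ ⊆ S) :
    ∏ t ∈ Finset.Icc 1 (nullity K S), β t < flagCount K S := by
  induction hi : nullity K S generalizing S with
  | zero =>
    have := Nat.sub_le_sub_right (Finset.card_le_card hsub) (rk K Finset.univ)
    rw [nullity, hS₀] at h0
    rw [nullity, hS] at hi
    omega
  | succ i ih =>
    rw [flagCount_eq_sum hS (by omega), Finset.prod_Icc_succ_top (by omega)]
    have hP := prod_pos_of_le_nullity hS hβpos (i := i) (by omega)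
    have hle : ∀ v ∈ nonColoops K S,
        ∏ t ∈ Finset.Icc 1 i, β t ≤ flagCount K (S.erase v) :=
      fun v hv => by
        have := hM.prod_le_flagCount hβ (rk_erase_eq_of_mem_nonColoops hv hS)
        rwa [show nullity K (S.erase v) = i by have := nullity_erase hv; omega] at this
    have hsum : (∏ t ∈ Finset.Icc 1 i, β t) * (nonColoops K S).card
        = ∑ v ∈ nonColoops K S, ∏ t ∈ Finset.Icc 1 i, β t := by
      rw [Finset.sum_const, smul_eq_mul, mul_comm]
    rcases eq_or_ne S₀ S with rfl | hne
    · calc (∏ t ∈ Finset.Icc 1 i, β t) * β (i + 1)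
          < (∏ t ∈ Finset.Icc 1 i, β t) * (nonColoops K S₀).card :=
            Nat.mul_lt_mul_of_pos_left (hi ▸ hlt) hP
        _ ≤ _ := hsum ▸ Finset.sum_le_sum hle
    · obtain ⟨v, hvS, hvS₀⟩ :=
        Finset.exists_of_ssubset (Finset.ssubset_iff_subset_ne.2 ⟨hsub, hne⟩)
      have hv := mem_nonColoops_of_spanning_subset hS₀ hsub hvS hvS₀
      calc (∏ t ∈ Finset.Icc 1 i, β t) * β (i + 1)
          ≤ (∏ t ∈ Finset.Icc 1 i, β t) * (nonColoops K S).card :=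
            Nat.mul_le_mul_left _ (hi ▸ hβ S hS (by omega))
        _ < _ := hsum ▸ Finset.sum_lt_sum hle ⟨v, hv, ih (rk_erase_eq_of_mem_nonColoops hv hS)
            (Finset.subset_erase.2 ⟨hsub, hvS₀⟩) (by have := nullity_erase hv; omega)⟩

theorem flagCount_lt_prod
    (hβ : ∀ S, rk K S = rk K Finset.univ → 0 < nullity K S →
      (nonColoops K S).card ≤ β (nullity K S))
    (hβpos : ∀ t ∈ Finset.Icc 1 (nullity K Finset.univ), 0 < β t)
    {S₀ : Finset (Fin n)} (hS₀ : rk K S₀ = rk K Finset.univ) (h0 : 0 < nullity K S₀)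
    (hlt : (nonColoops K S₀).card < β (nullity K S₀))
    {S : Finset (Fin n)} (hS : rk K S = rk K Finset.univ) (hsub : S₀ ⊆ S) :
    flagCount K S < ∏ t ∈ Finset.Icc 1 (nullity K S), β t := by
  induction hi : nullity K S generalizing S with
  | zero =>
    have := Nat.sub_le_sub_right (Finset.card_le_card hsub) (rk K Finset.univ)
    rw [nullity, hS₀] at h0
    rw [nullity, hS] at hi
    omega
  | succ i ih =>
    rw [flagCount_eq_sum hS (by omega), Finset.prod_Icc_succ_top (by omega)]
    have hP := prod_pos_of_le_nullity hS hβpos (i := i) (by omega)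
    have hle : ∀ v ∈ nonColoops K S,
        flagCount K (S.erase v) ≤ ∏ t ∈ Finset.Icc 1 i, β t :=
      fun v hv => by
        have := hM.flagCount_le_prod hβ (rk_erase_eq_of_mem_nonColoops hv hS)
        rwa [show nullity K (S.erase v) = i by have := nullity_erase hv; omega] at this
    have hsum : ∑ v ∈ nonColoops K S, ∏ t ∈ Finset.Icc 1 i, β t
        = (∏ t ∈ Finset.Icc 1 i, β t) * (nonColoops K S).card := by
      rw [Finset.sum_const, smul_eq_mul, mul_comm]
    rcases eq_or_ne S₀ S with rfl | hne
    · calc _ ≤ (∏ t ∈ Finset.Icc 1 i, β t) * (nonColoops K S₀).card :=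
            hsum ▸ Finset.sum_le_sum hle
        _ < (∏ t ∈ Finset.Icc 1 i, β t) * β (i + 1) :=
            Nat.mul_lt_mul_of_pos_left (hi ▸ hlt) hP
    · obtain ⟨v, hvS, hvS₀⟩ :=
        Finset.exists_of_ssubset (Finset.ssubset_iff_subset_ne.2 ⟨hsub, hne⟩)
      have hv := mem_nonColoops_of_spanning_subset hS₀ hsub hvS hvS₀
      calc _ < (∏ t ∈ Finset.Icc 1 i, β t) * (nonColoops K S).card :=
            hsum ▸ Finset.sum_lt_sum hle ⟨v, hv, ih (rk_erase_eq_of_mem_nonColoops hv hS)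
              (Finset.subset_erase.2 ⟨hsub, hvS₀⟩) (by have := nullity_erase hv; omega)⟩
        _ ≤ (∏ t ∈ Finset.Icc 1 i, β t) * β (i + 1) :=
            Nat.mul_le_mul_left _ (hi ▸ hβ S hS (by omega))

end IsMatroid

end Bounds

section Shifts

variable {K : Finset (Finset (Fin n))}

def shiftSet (K : Finset (Finset (Fin n))) (i : ℕ) : Set ℕ :=
  {m | ∃ W : Finset (Fin n), W.card = m ∧ homNonzero k (induced K W) ((W.card : ℤ) - i - 1)}

lemma shiftSet_bddAbove (K : Finset (Finset (Fin n))) (i : ℕ) : BddAbove (shiftSet k K i) :=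
  ⟨n, by rintro m ⟨W, rfl, -⟩; simpa using Finset.card_le_univ W⟩

namespace IsMatroid

variable (hM : IsMatroid K)
include hM

lemma mem_shiftSet_iff {i m : ℕ} :
    m ∈ shiftSet k K i ↔
      ∃ W : Finset (Fin n), W.card = m ∧ nullity K W = i ∧ IsColoopFree K W := by
  refine exists_congr fun W => and_congr_right fun _ => ?_
  rw [(hM.isMatroid_induced W).homNonzero_iff k, rk_induced, Finset.inter_univ,
    isColoopFree_induced_univ_iff, nullity]
  have := rk_le_card K W
  constructor
  · rintro ⟨h, hfree⟩; exact ⟨by omega, hfree⟩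
  · rintro ⟨h, hfree⟩; exact ⟨by omega, hfree⟩

lemma card_nonColoops_mem_shiftSet (S : Finset (Fin n)) :
    (nonColoops K S).card ∈ shiftSet k K (nullity K S) :=
  (hM.mem_shiftSet_iff k).2 ⟨_, rfl, hM.nullity_nonColoops S, hM.isColoopFree_nonColoops S⟩

lemma exists_spanning_of_mem_shiftSet {i m : ℕ} (hm : m ∈ shiftSet k K i) :
    ∃ S, rk K S = rk K Finset.univ ∧ nullity K S = i ∧ (nonColoops K S).card = m := by
  obtain ⟨W, rfl, rfl, hW⟩ := (hM.mem_shiftSet_iff k).1 hm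
  obtain ⟨S, hS, hnull, hN⟩ := hM.exists_spanning_nonColoops_eq hW
  exact ⟨S, hS, hnull, by rw [hN]⟩

lemma shiftSet_nonempty {i : ℕ} (hi : i ≤ nullity K Finset.univ) :
    (shiftSet k K i).Nonempty := by
  obtain ⟨B, hB, -, hBc⟩ := hM.exists_basis Finset.univ
  obtain ⟨T, hT, hTc⟩ := Finset.exists_subset_card_eq (s := Finset.univ \ B) (n := i) (by
    rw [Finset.card_sdiff_of_subset B.subset_univ, hBc]
    exact hi)
  have hrk : rk K (B ∪ T) = rk K Finset.univ :=
    (rk_mono K (B ∪ T).subset_univ).antisymm (hBc ▸ card_le_rk hB Finset.subset_union_left)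
  have hdisj : Disjoint B T := Finset.disjoint_of_subset_right hT Finset.disjoint_sdiff
  have h := hM.card_nonColoops_mem_shiftSet k (B ∪ T)
  rw [nullity, hrk, Finset.card_union_of_disjoint hdisj, hBc, hTc, Nat.add_sub_cancel_left] at h
  exact ⟨_, h⟩

lemma mshift_le_card_nonColoops (S : Finset (Fin n)) :
    mshift k K (nullity K S) ≤ (nonColoops K S).card :=
  Nat.sInf_le (hM.card_nonColoops_mem_shiftSet k S)

lemma card_nonColoops_le_Mshift (S : Finset (Fin n)) :
    (nonColoops K S).card ≤ Mshift k K (nullity K S) :=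
  le_csSup (shiftSet_bddAbove k K _) (hM.card_nonColoops_mem_shiftSet k S)

lemma mshift_le_Mshift {i : ℕ} (hi : i ≤ nullity K Finset.univ) :
    mshift k K i ≤ Mshift k K i :=
  Nat.sInf_le (Nat.sSup_mem (hM.shiftSet_nonempty k hi) (shiftSet_bddAbove k K i))

lemma mshift_pos {i : ℕ} (hi : i ∈ Finset.Icc 1 (nullity K Finset.univ)) :
    0 < mshift k K i := by
  obtain ⟨W, hW, hnull, -⟩ := (hM.mem_shiftSet_iff k).1
    (Nat.sInf_mem (hM.shiftSet_nonempty k (Finset.mem_Icc.1 hi).2))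
  have := (Finset.mem_Icc.1 hi).1
  unfold nullity at hnull
  change _ = mshift k K i at hW
  omega

lemma Mshift_pos {i : ℕ} (hi : i ∈ Finset.Icc 1 (nullity K Finset.univ)) : 0 < Mshift k K i :=
  (hM.mshift_pos k hi).trans_le (hM.mshift_le_Mshift k (Finset.mem_Icc.1 hi).2)

theorem prod_mshift_le_flagCount :
    ∏ i ∈ Finset.Icc 1 (nullity K Finset.univ), mshift k K i ≤ flagCount K Finset.univ :=
  hM.prod_le_flagCount (fun S _ _ => hM.mshift_le_card_nonColoops k S) rfl

theorem flagCount_le_prod_Mshift :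
    flagCount K Finset.univ ≤ ∏ i ∈ Finset.Icc 1 (nullity K Finset.univ), Mshift k K i :=
  hM.flagCount_le_prod (fun S _ _ => hM.card_nonColoops_le_Mshift k S) rfl

theorem mshift_eq_Mshift_of_prod_mshift_eq
    (h : ∏ i ∈ Finset.Icc 1 (nullity K Finset.univ), mshift k K i = flagCount K Finset.univ)
    {i : ℕ} (hi : i ∈ Finset.Icc 1 (nullity K Finset.univ)) : mshift k K i = Mshift k K i := by
  by_contra hne
  obtain ⟨S₀, hS₀, rfl, hcard⟩ := hM.exists_spanning_of_mem_shiftSet k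
    (Nat.sSup_mem (hM.shiftSet_nonempty k (Finset.mem_Icc.1 hi).2) (shiftSet_bddAbove k K _))
  refine (hM.prod_lt_flagCount (fun S _ _ => hM.mshift_le_card_nonColoops k S)
    (fun t ht => hM.mshift_pos k ht) hS₀ (Finset.mem_Icc.1 hi).1 ?_ rfl S₀.subset_univ).ne h
  exact hcard ▸ (hM.mshift_le_Mshift k (Finset.mem_Icc.1 hi).2).lt_of_ne hne

theorem mshift_eq_Mshift_of_flagCount_eq_prod
    (h : flagCount K Finset.univ = ∏ i ∈ Finset.Icc 1 (nullity K Finset.univ), Mshift k K i)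
    {i : ℕ} (hi : i ∈ Finset.Icc 1 (nullity K Finset.univ)) : mshift k K i = Mshift k K i := by
  by_contra hne
  obtain ⟨S₀, hS₀, rfl, hcard⟩ := hM.exists_spanning_of_mem_shiftSet k
    (Nat.sInf_mem (hM.shiftSet_nonempty k (Finset.mem_Icc.1 hi).2))
  refine (hM.flagCount_lt_prod (fun S _ _ => hM.card_nonColoops_le_Mshift k S)
    (fun t ht => hM.Mshift_pos k ht) hS₀ (Finset.mem_Icc.1 hi).1 ?_ rfl S₀.subset_univ).ne h
  exact hcard ▸ (hM.mshift_le_Mshift k (Finset.mem_Icc.1 hi).2).lt_of_ne hne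

end IsMatroid

end Shifts

theorem matroid_multiplicity_general
    (n d : ℕ) (k : Type) [Field k] (K : Finset (Finset (Fin n)))
    (hK : IsComplex K)
    (hmat : ∀ W : Finset (Fin n), IsPure (induced K W))
    (hdim : dimOf K = (d : ℤ) - 1) :
    (∏ i ∈ Finset.Icc 1 (n - d), (mshift k K i : ℚ)) / (n - d).factorial ≤
        fcount K d ∧
    (fcount K d : ℚ) ≤
        (∏ i ∈ Finset.Icc 1 (n - d), (Mshift k K i : ℚ)) / (n - d).factorial ∧
    (((∏ i ∈ Finset.Icc 1 (n - d), (mshift k K i : ℚ)) / (n - d).factorial =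
          fcount K d ∨
        (fcount K d : ℚ) =
          (∏ i ∈ Finset.Icc 1 (n - d), (Mshift k K i : ℚ)) / (n - d).factorial) →
      ∀ i ∈ Finset.Icc 1 (n - d), mshift k K i = Mshift k K i) := by
  have hM := isMatroid_of_isPure hK hmat
  have hd := rk_univ_eq_of_dimOf hdim
  have hc : nullity K Finset.univ = n - d := by simp [nullity, hd]
  have hf : flagCount K Finset.univ = fcount K d * (n - d).factorial := by
    rw [flagCount_univ, hd, mul_comm]
  have hlow := hM.prod_mshift_le_flagCount k
  have hup := hM.flagCount_le_prod_Mshift k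
  rw [hc, hf] at hlow hup
  have hfac : (0 : ℚ) < (n - d).factorial := by positivity
  simp only [div_le_iff₀ hfac, le_div_iff₀ hfac, div_eq_iff hfac.ne', eq_div_iff hfac.ne']
  refine ⟨by exact_mod_cast hlow, by exact_mod_cast hup, fun h i hi => ?_⟩
  rw [← hc] at hi
  rcases h with h | h
  · exact hM.mshift_eq_Mshift_of_prod_mshift_eq k (by rw [hf, hc]; exact_mod_cast h) hi
  · exact hM.mshift_eq_Mshift_of_flagCount_eq_prod k (by rw [hf, hc]; exact_mod_cast h) hi

/-- Theorem 2.1: the multiplicity conjecture for matroid complexes, together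
with the statement that if either bound is attained then the resolution of
the face ring is pure. -/
theorem matroid_multiplicity
    (n d : ℕ) (k : Type) [Field k] (K : Finset (Finset (Fin n)))
    (hd : 0 < d) (hdn : d ≤ n)
    (hK : IsComplex K) (hv : ∀ v : Fin n, {v} ∈ K)
    (hmat : ∀ W : Finset (Fin n), IsPure (induced K W))
    (hdim : dimOf K = (d : ℤ) - 1) :
    (∏ i ∈ Finset.Icc 1 (n - d), (mshift k K i : ℚ)) / (n - d).factorial ≤
        fcount K d ∧
    (fcount K d : ℚ) ≤
        (∏ i ∈ Finset.Icc 1 (n - d), (Mshift k K i : ℚ)) / (n - d).factorial ∧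
    (((∏ i ∈ Finset.Icc 1 (n - d), (mshift k K i : ℚ)) / (n - d).factorial =
          fcount K d ∨
        (fcount K d : ℚ) =
          (∏ i ∈ Finset.Icc 1 (n - d), (Mshift k K i : ℚ)) / (n - d).factorial) →
      ∀ i ∈ Finset.Icc 1 (n - d), mshift k K i = Mshift k K i) :=
  matroid_multiplicity_general n d k K hK hmat hdim

end MultConj
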